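/- In the monoid G⁺_{B_ii} = ⟨ a, b, c | cbb = bba, ab = bc, ac = ca ⟩_mo, left cancellativity holds, and the following divisibility facts hold: (i) if aX = bY then X = bZ and Y = cZ for some Z; (ii) if aX = cY then X = cZ and Y = aZ for some Z; (iii) if bX = cY then there exist k ≥ 0 and Z with X = c^k·b·a·Z and Y = a^k·b·b·Z. -/

import Mathlib

/-- The three generators of the monoid of type B_ii. -/
inductive BGen : Type
  | a : BGen
  | b : BGen
  | c : BGen
deriving DecidableEq

/-- The defining relations cbb = bba, ab = bc, ac = ca. -/
inductive BRel : FreeMonoid BGen → FreeMonoid BGen → Prop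
  | cbb : BRel (FreeMonoid.of BGen.c * FreeMonoid.of BGen.b * FreeMonoid.of BGen.b)
               (FreeMonoid.of BGen.b * FreeMonoid.of BGen.b * FreeMonoid.of BGen.a)
  | ab : BRel (FreeMonoid.of BGen.a * FreeMonoid.of BGen.b)
              (FreeMonoid.of BGen.b * FreeMonoid.of BGen.c)
  | ac : BRel (FreeMonoid.of BGen.a * FreeMonoid.of BGen.c)
              (FreeMonoid.of BGen.c * FreeMonoid.of BGen.a)

/-- The monoid G⁺_{B_ii} = ⟨ a, b, c ∣ cbb = bba, ab = bc, ac = ca ⟩_mo. -/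
abbrev BMonoid : Type := (conGen BRel).Quotient

/-- The images of the generators in the monoid. -/
def bA : BMonoid := (conGen BRel).mk' (FreeMonoid.of BGen.a)
def bB : BMonoid := (conGen BRel).mk' (FreeMonoid.of BGen.b)
def bC : BMonoid := (conGen BRel).mk' (FreeMonoid.of BGen.c)


/-!
Every element of `G⁺_{B_ii}` has a normal form `a^x c^y` or `a^x c^y b a^z b^n`: left multiplication
by a generator maps normal forms to normal forms, the only non-obvious case being
`b · a^x c^y b a^z = a^y c^z b a^x b`, which comes from `ab = bc`, `ac = ca` and `cbb = bba`.
The assignment `a ↦ ((1,0,0), 0)`, `c ↦ ((0,1,0), 0)`, `b ↦ (0, 1)` defines a homomorphism into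
`ℕ³ ⋊ ℕ`, where `1 ∈ ℕ` acts by `(x, y, z) ↦ (y, z, x)`; it sends `a^x c^y` to `((x,y,0), 0)` and
`a^x c^y b a^z b^n` to `((x,y,z), n+1)`, so it separates normal forms and is injective. Since
`ℕ³ ⋊ ℕ` is left cancellative, so is `G⁺_{B_ii}`, and (i)–(iii) follow by comparing the normal
forms of both sides.
-/

/-- The semidirect product `M ⋊ ℕ` in which `1 ∈ ℕ` acts by `f`. -/
@[ext]
structure SkewProd {M : Type*} [AddMonoid M] (f : AddMonoid.End M) where
  v : M
  n : ℕ

namespace SkewProd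

variable {M : Type*} [AddMonoid M] {f : AddMonoid.End M}

instance : Mul (SkewProd f) := ⟨fun p q => ⟨p.v + (f ^ p.n) q.v, p.n + q.n⟩⟩

instance : One (SkewProd f) := ⟨⟨0, 0⟩⟩

@[simp] lemma mul_v (p q : SkewProd f) : (p * q).v = p.v + (f ^ p.n) q.v := rfl

@[simp] lemma mul_n (p q : SkewProd f) : (p * q).n = p.n + q.n := rfl

@[simp] lemma one_v : (1 : SkewProd f).v = 0 := rfl

@[simp] lemma one_n : (1 : SkewProd f).n = 0 := rfl

instance : Monoid (SkewProd f) where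
  mul_assoc p q r := by ext <;> simp [pow_add, add_assoc]
  one_mul p := by ext <;> simp
  mul_one p := by ext <;> simp

lemma mk_zero_pow (v : M) (k : ℕ) : (⟨v, 0⟩ : SkewProd f) ^ k = ⟨k • v, 0⟩ := by
  induction k with
  | zero => ext <;> simp
  | succ k ih => ext <;> simp [pow_succ, ih, succ_nsmul]

lemma zero_mk_pow (m k : ℕ) : (⟨0, m⟩ : SkewProd f) ^ k = ⟨0, k * m⟩ := by
  induction k with
  | zero => ext <;> simp
  | succ k ih => ext <;> simp [pow_succ, ih, add_mul]

lemma mul_left_cancel_of_injective [IsLeftCancelAdd M] (hf : Function.Injective f)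
    {p q r : SkewProd f} (h : p * q = p * r) : q = r := by
  have hv : (f ^ p.n) q.v = (f ^ p.n) r.v := add_left_cancel (congrArg SkewProd.v h)
  rw [AddMonoid.End.coe_pow] at hv
  exact SkewProd.ext (hf.iterate p.n hv) (Nat.add_left_cancel (congrArg SkewProd.n h))

end SkewProd

def rot3 : AddMonoid.End (ℕ × ℕ × ℕ) where
  toFun v := (v.2.1, v.2.2, v.1)
  map_zero' := rfl
  map_add' _ _ := rfl

@[simp] lemma rot3_apply (v : ℕ × ℕ × ℕ) : rot3 v = (v.2.1, v.2.2, v.1) := rfl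

lemma rot3_injective : Function.Injective rot3 := by
  rintro ⟨x, y, z⟩ ⟨x', y', z'⟩ h
  simp_all

namespace BMonoid

lemma bC_mul_bB_mul_bB : bC * bB * bB = bB * bB * bA := (Con.eq _).mpr (.of _ _ .cbb)

lemma bA_mul_bB : bA * bB = bB * bC := (Con.eq _).mpr (.of _ _ .ab)

lemma commute_bA_bC : Commute bA bC := (Con.eq _).mpr (.of _ _ .ac)

lemma bA_pow_mul_bB_mul (x : ℕ) (t : BMonoid) : bA ^ x * (bB * t) = bB * (bC ^ x * t) := by
  rw [← mul_assoc, ← (SemiconjBy.pow_right bA_mul_bB.symm x).eq, mul_assoc]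

lemma bA_mul_bB_mul (t : BMonoid) : bA * (bB * t) = bB * (bC * t) := by
  simpa using bA_pow_mul_bB_mul 1 t

lemma bA_pow_mul_bC_pow_mul (x y : ℕ) (t : BMonoid) :
    bA ^ x * (bC ^ y * t) = bC ^ y * (bA ^ x * t) :=
  (commute_bA_bC.pow_pow x y).left_comm t

lemma bB_mul_bA_pow_mul_bC_pow_mul (x y : ℕ) (t : BMonoid) :
    bB * (bA ^ x * (bC ^ y * t)) = bA ^ y * (bB * (bA ^ x * t)) := by
  rw [bA_pow_mul_bC_pow_mul, bA_pow_mul_bB_mul]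

lemma bB_mul_bA_pow_mul_bB_mul_bA_mul (x : ℕ) (t : BMonoid) :
    bB * (bA ^ x * (bB * (bA * t))) = bC * (bB * (bA ^ x * (bB * t))) := by
  induction x generalizing t with
  | zero =>
    simp only [pow_zero, one_mul, ← mul_assoc, bC_mul_bB_mul_bB]
  | succ k ih =>
    calc bB * (bA ^ (k + 1) * (bB * (bA * t)))
        = bB * (bA ^ k * (bB * (bA * (bC * t)))) := by
          rw [pow_succ, mul_assoc, bA_mul_bB_mul, commute_bA_bC.left_comm]
      _ = bC * (bB * (bA ^ k * (bB * (bC * t)))) := ih _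
      _ = bC * (bB * (bA ^ (k + 1) * (bB * t))) := by rw [← bA_mul_bB_mul, pow_succ, mul_assoc]

lemma bB_mul_bA_pow_mul_bC_pow_mul_bB_mul_bA_pow_mul (x y z : ℕ) (t : BMonoid) :
    bB * (bA ^ x * (bC ^ y * (bB * (bA ^ z * t)))) =
      bA ^ y * (bC ^ z * (bB * (bA ^ x * (bB * t)))) := by
  induction z generalizing t with
  | zero => simp only [pow_zero, one_mul, bB_mul_bA_pow_mul_bC_pow_mul]
  | succ k ih =>
    rw [pow_succ, mul_assoc, ih, bB_mul_bA_pow_mul_bB_mul_bA_mul, pow_succ, mul_assoc]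

def nf₀ (x y : ℕ) : BMonoid := bA ^ x * bC ^ y

def nf₁ (x y z n : ℕ) : BMonoid := bA ^ x * (bC ^ y * (bB * (bA ^ z * bB ^ n)))

@[simp] lemma bA_mul_nf₀ (x y : ℕ) : bA * nf₀ x y = nf₀ (x + 1) y := by
  rw [nf₀, nf₀, ← mul_assoc, ← pow_succ']

@[simp] lemma bC_mul_nf₀ (x y : ℕ) : bC * nf₀ x y = nf₀ x (y + 1) := by
  rw [nf₀, nf₀, ← mul_assoc, ← commute_bA_bC.pow_left, mul_assoc, ← pow_succ']

@[simp] lemma bB_mul_nf₀ (x y : ℕ) : bB * nf₀ x y = nf₁ y 0 x 0 := by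
  simpa [nf₀, nf₁] using bB_mul_bA_pow_mul_bC_pow_mul x y 1

@[simp] lemma bA_pow_mul_nf₁ (k x y z n : ℕ) : bA ^ k * nf₁ x y z n = nf₁ (k + x) y z n := by
  rw [nf₁, nf₁, ← mul_assoc, ← pow_add]

@[simp] lemma bC_pow_mul_nf₁ (k x y z n : ℕ) : bC ^ k * nf₁ x y z n = nf₁ x (k + y) z n := by
  rw [nf₁, nf₁, ← bA_pow_mul_bC_pow_mul, ← mul_assoc (bC ^ k), ← pow_add]

@[simp] lemma bA_mul_nf₁ (x y z n : ℕ) : bA * nf₁ x y z n = nf₁ (x + 1) y z n := by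
  simpa [add_comm] using bA_pow_mul_nf₁ 1 x y z n

@[simp] lemma bC_mul_nf₁ (x y z n : ℕ) : bC * nf₁ x y z n = nf₁ x (y + 1) z n := by
  simpa [add_comm] using bC_pow_mul_nf₁ 1 x y z n

@[simp] lemma bB_mul_nf₁ (x y z n : ℕ) : bB * nf₁ x y z n = nf₁ y z x (n + 1) := by
  rw [nf₁, nf₁, bB_mul_bA_pow_mul_bC_pow_mul_bB_mul_bA_pow_mul, pow_succ']

lemma exists_eq_nf (u : BMonoid) :
    (∃ x y, u = nf₀ x y) ∨ ∃ x y z n, u = nf₁ x y z n := by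
  induction u using Con.induction_on with
  | H w =>
    induction w using FreeMonoid.inductionOn' with
    | one => exact .inl ⟨0, 0, by simp [nf₀]⟩
    | of_mul g w ih =>
      rw [Con.coe_mul]
      rcases ih with ⟨x, y, h⟩ | ⟨x, y, z, n, h⟩ <;> rw [h] <;> cases g
      · exact .inl ⟨x + 1, y, bA_mul_nf₀ x y⟩
      · exact .inr ⟨y, 0, x, 0, bB_mul_nf₀ x y⟩
      · exact .inl ⟨x, y + 1, bC_mul_nf₀ x y⟩
      · exact .inr ⟨x + 1, y, z, n, bA_mul_nf₁ x y z n⟩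
      · exact .inr ⟨y, z, x, n + 1, bB_mul_nf₁ x y z n⟩
      · exact .inr ⟨x, y + 1, z, n, bC_mul_nf₁ x y z n⟩

def genModel : BGen → SkewProd rot3
  | .a => ⟨(1, 0, 0), 0⟩
  | .b => ⟨0, 1⟩
  | .c => ⟨(0, 1, 0), 0⟩

lemma conGen_le_ker_lift_genModel : conGen BRel ≤ Con.ker (FreeMonoid.lift genModel) :=
  Con.conGen_le.mpr fun _ _ h => by cases h <;> rfl

def toModel : BMonoid →* SkewProd rot3 :=
  Con.lift _ (FreeMonoid.lift genModel) conGen_le_ker_lift_genModel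

lemma toModel_bA : toModel bA = ⟨(1, 0, 0), 0⟩ := rfl

lemma toModel_bB : toModel bB = ⟨0, 1⟩ := rfl

lemma toModel_bC : toModel bC = ⟨(0, 1, 0), 0⟩ := rfl

lemma toModel_nf₀ (x y : ℕ) : toModel (nf₀ x y) = ⟨(x, y, 0), 0⟩ := by
  ext <;> simp [nf₀, toModel_bA, toModel_bC, SkewProd.mk_zero_pow]

lemma toModel_nf₁ (x y z n : ℕ) : toModel (nf₁ x y z n) = ⟨(x, y, z), n + 1⟩ := by
  ext <;> simp [nf₁, toModel_bA, toModel_bB, toModel_bC, SkewProd.mk_zero_pow, SkewProd.zero_mk_pow,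
    add_comm]

@[simp] lemma nf₀_inj {x y x' y' : ℕ} : nf₀ x y = nf₀ x' y' ↔ x = x' ∧ y = y' :=
  ⟨fun h => by simpa [toModel_nf₀] using congrArg toModel h, by rintro ⟨rfl, rfl⟩; rfl⟩

@[simp] lemma nf₁_inj {x y z n x' y' z' n' : ℕ} :
    nf₁ x y z n = nf₁ x' y' z' n' ↔ x = x' ∧ y = y' ∧ z = z' ∧ n = n' :=
  ⟨fun h => by simpa [toModel_nf₁, and_assoc] using congrArg toModel h,
    by rintro ⟨rfl, rfl, rfl, rfl⟩; rfl⟩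

@[simp] lemma nf₀_ne_nf₁ (x y x' y' z' n' : ℕ) : nf₀ x y ≠ nf₁ x' y' z' n' := fun h => by
  simpa [toModel_nf₀, toModel_nf₁] using congrArg toModel h

@[simp] lemma nf₁_ne_nf₀ (x y z n x' y' : ℕ) : nf₁ x y z n ≠ nf₀ x' y' :=
  (nf₀_ne_nf₁ _ _ _ _ _ _).symm

lemma toModel_injective : Function.Injective toModel := by
  intro u w h
  rcases exists_eq_nf u with ⟨x, y, rfl⟩ | ⟨x, y, z, n, rfl⟩ <;>
    rcases exists_eq_nf w with ⟨x', y', rfl⟩ | ⟨x', y', z', n', rfl⟩ <;>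
    simp_all [toModel_nf₀, toModel_nf₁]

instance : IsLeftCancelMul BMonoid where
  mul_left_cancel u v w h := toModel_injective <|
    SkewProd.mul_left_cancel_of_injective rot3_injective (by simpa using congrArg toModel h)

lemma exists_of_bA_mul_eq_bB_mul {X Y : BMonoid} (h : bA * X = bB * Y) :
    ∃ Z, X = bB * Z ∧ Y = bC * Z := by
  rcases exists_eq_nf X with ⟨x, y, rfl⟩ | ⟨x, y, z, n, rfl⟩ <;>
    rcases exists_eq_nf Y with ⟨x', y', rfl⟩ | ⟨x', y', z', n', rfl⟩ <;>
    simp only [bA_mul_nf₀, bA_mul_nf₁, bB_mul_nf₀, bB_mul_nf₁, nf₁_inj, nf₀_ne_nf₁] at h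
  · obtain ⟨rfl, rfl, rfl, rfl⟩ := h
    exact ⟨nf₀ z x, by simp, by simp⟩
  · obtain ⟨rfl, rfl, rfl, rfl⟩ := h
    exact ⟨nf₁ z x y n', by simp, by simp⟩

lemma exists_of_bA_mul_eq_bC_mul {X Y : BMonoid} (h : bA * X = bC * Y) :
    ∃ Z, X = bC * Z ∧ Y = bA * Z := by
  rcases exists_eq_nf X with ⟨x, y, rfl⟩ | ⟨x, y, z, n, rfl⟩ <;>
    rcases exists_eq_nf Y with ⟨x', y', rfl⟩ | ⟨x', y', z', n', rfl⟩ <;>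
    simp only [bA_mul_nf₀, bA_mul_nf₁, bC_mul_nf₀, bC_mul_nf₁, nf₀_inj, nf₁_inj, nf₀_ne_nf₁,
      nf₁_ne_nf₀] at h
  · obtain ⟨rfl, rfl⟩ := h
    exact ⟨nf₀ x y', by simp, by simp⟩
  · obtain ⟨rfl, rfl, rfl, rfl⟩ := h
    exact ⟨nf₁ x y' z n, by simp, by simp⟩

lemma exists_of_bB_mul_eq_bC_mul {X Y : BMonoid} (h : bB * X = bC * Y) :
    ∃ (k : ℕ) (Z : BMonoid), X = bC ^ k * bB * bA * Z ∧ Y = bA ^ k * bB * bB * Z := by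
  rcases exists_eq_nf X with ⟨x, y, rfl⟩ | ⟨x, y, z, n, rfl⟩ <;>
    rcases exists_eq_nf Y with ⟨x', y', rfl⟩ | ⟨x', y', z', n', rfl⟩ <;>
    simp only [bB_mul_nf₀, bB_mul_nf₁, bC_mul_nf₀, bC_mul_nf₁, nf₁_inj, nf₁_ne_nf₀,
      Nat.zero_ne_add_one, false_and, and_false] at h
  obtain ⟨rfl, rfl, rfl, rfl⟩ := h
  refine ⟨y, ?_⟩
  cases n with
  | zero => exact ⟨nf₀ y' x, by simp [mul_assoc], by simp [mul_assoc]⟩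
  | succ m => exact ⟨nf₁ y' x 0 m, by simp [mul_assoc], by simp [mul_assoc]⟩

end BMonoid

open BMonoid

/-- Left cancellativity and the reduction lemma for G⁺_{B_ii}:
(i) aX = bY implies X = bZ, Y = cZ; (ii) aX = cY implies X = cZ, Y = aZ;
(iii) bX = cY implies X = c^k·b·a·Z, Y = a^k·b·b·Z for some k and Z. -/
theorem stmt_15 :
    (∀ x y z : BMonoid, x * y = x * z → y = z) ∧
    (∀ X Y : BMonoid, bA * X = bB * Y → ∃ Z : BMonoid, X = bB * Z ∧ Y = bC * Z) ∧
    (∀ X Y : BMonoid, bA * X = bC * Y → ∃ Z : BMonoid, X = bC * Z ∧ Y = bA * Z) ∧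
    (∀ X Y : BMonoid, bB * X = bC * Y → ∃ (k : ℕ) (Z : BMonoid),
      X = bC ^ k * bB * bA * Z ∧ Y = bA ^ k * bB * bB * Z) :=
  ⟨fun _ _ _ => mul_left_cancel, fun _ _ => exists_of_bA_mul_eq_bB_mul,
    fun _ _ => exists_of_bA_mul_eq_bC_mul, fun _ _ => exists_of_bB_mul_eq_bC_mul⟩
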